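/- Let R be a Noetherian integrally closed (normal) domain, and let 0 → M → N → Q → 0 be a short exact sequence of R-modules where N is a finitely generated reflexive R-module and every prime ideal in the support of Q has height at least 2. Then the inclusion M → N is an isomorphism if and only if M is reflexive. -/

import Mathlib

/-!
Since `⊥ ∉ Supp Q`, `Q` is torsion; hence `i.dualMap` is injective, and a functional `g` on `M`
extends to `N` with values in the fraction field `K` by `n ↦ g m / r` whenever `i m = r • n`.
This value lies in `R`: its ideal of denominators contains `Ann (p n)`, so it lies in no prime
of height `≤ 1`, whereas in a Noetherian normal domain every `x ∈ K ∖ R` has its ideal of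
denominators inside a prime of height `≤ 1` (a maximal ideal of denominators is prime, and it is
minimal over a principal ideal by integral closedness). Thus `i.dualMap` is bijective, and so
is `i`, as `M` and `N` are reflexive.
-/

open Module Function LinearMap Submodule

theorem Ideal.height_le_one_of_mul_mem_span_singleton {R : Type*} [CommRing R]
    [IsNoetherianRing R] {P : Ideal R} [P.IsPrime] {t u : R} (ht : t ∈ P) (hu : u ∉ P)
    (h : ∀ s ∈ P, u * s ∈ Ideal.span {t}) : P.height ≤ 1 := by
  refine Ideal.height_le_one_of_isPrincipal_of_mem_minimalPrimes (Ideal.span {t}) P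
    ⟨⟨‹_›, Ideal.span_le.mpr (by simpa using ht)⟩, fun q ⟨hq, htq⟩ hqP s hs => ?_⟩
  exact (hq.mem_or_mem (htq (h s hs))).resolve_left fun huq => hu (hqP huq)

theorem Submodule.isPrime_colon_singleton_of_forall_colon_smul_le {R M : Type*} [CommRing R]
    [AddCommGroup M] [Module R M] {N : Submodule R M} {y : M} (hy : y ∉ N)
    (hmax : ∀ a : R, a • y ∉ N → N.colon {a • y} ≤ N.colon {y}) : (N.colon {y}).IsPrime := by
  refine ⟨(Ideal.ne_top_iff_one _).mpr (by simpa using hy), fun {a b} hab => ?_⟩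
  refine or_iff_not_imp_left.mpr fun ha => hmax a (by simpa using ha) ?_
  rw [mem_colon_singleton, smul_smul, mul_comm]
  exact mem_colon_singleton.mp hab

section Denominators

variable {R K : Type*} [CommRing R] [IsNoetherianRing R] [Field K] [Algebra R K]
  [IsFractionRing R K]

theorem height_one_colon_singleton_le_one [IsIntegrallyClosed R] {y : K}
    (hy : y ∉ (1 : Submodule R K)) [((1 : Submodule R K).colon {y}).IsPrime]
    (hbot : (1 : Submodule R K).colon {y} ≠ ⊥) :
    ((1 : Submodule R K).colon {y}).height ≤ 1 := by
  set P := (1 : Submodule R K).colon {y}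
  let W : Submodule R K := Submodule.map (Algebra.linearMap R K) P
  -- Either `y P ⊆ P`, making `y` integral, or `u := t y ∉ P` for some `t ∈ P`, and `u P ⊆ t R`.
  by_cases hstab : ∀ w ∈ W, y • w ∈ W
  · have hW : W ≠ ⊥ := fun hW => hbot <| map_injective_of_injective
      (IsFractionRing.injective R K) (hW.trans (Submodule.map_bot _).symm)
    have hint := isIntegral_of_smul_mem_submodule W hW ((IsNoetherian.noetherian P).map _) y hstab
    exact absurd (mem_one.mpr (IsIntegrallyClosed.isIntegral_iff.mp hint)) hy
  push Not at hstab
  obtain ⟨_, ⟨t, htP, rfl⟩, hyt⟩ := hstab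
  obtain ⟨u, hu⟩ := mem_one.mp (mem_colon_singleton.mp htP)
  have huP : u ∉ P := fun huP => hyt ⟨u, huP, by simp [hu, Algebra.smul_def, mul_comm]⟩
  refine Ideal.height_le_one_of_mul_mem_span_singleton htP huP fun s hs => ?_
  obtain ⟨d, hd⟩ := mem_one.mp (mem_colon_singleton.mp hs)
  refine Ideal.mem_span_singleton'.mpr ⟨d, IsFractionRing.injective R K ?_⟩
  simp only [map_mul, hu, hd, Algebra.smul_def]
  ring

theorem exists_height_le_one_of_notMem_one [IsDomain R] [IsIntegrallyClosed R] {x : K}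
    (hx : x ∉ (1 : Submodule R K)) :
    ∃ 𝔭 : PrimeSpectrum R, (1 : Submodule R K).colon {x} ≤ 𝔭.asIdeal ∧ Order.height 𝔭 ≤ 1 := by
  obtain ⟨_, ⟨y, ⟨hy, hxy⟩, rfl⟩, hmax⟩ := set_has_maximal_iff_noetherian.mpr
    (inferInstance : IsNoetherian R R) ((fun y : K => (1 : Submodule R K).colon {y}) ''
      {y | y ∉ (1 : Submodule R K) ∧ (1 : Submodule R K).colon {x} ≤ (1 : Submodule R K).colon {y}})
    ⟨_, x, ⟨hx, le_rfl⟩, rfl⟩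
  have hP : ((1 : Submodule R K).colon {y}).IsPrime := by
    refine isPrime_colon_singleton_of_forall_colon_smul_le hy fun a ha => ?_
    have hle : (1 : Submodule R K).colon {y} ≤ (1 : Submodule R K).colon {a • y} := fun r hr => by
      rw [mem_colon_singleton, smul_comm]
      exact smul_mem _ a (mem_colon_singleton.mp hr)
    exact (hle.lt_or_eq.resolve_left (hmax _ ⟨a • y, ⟨ha, hxy.trans hle⟩, rfl⟩)).ge
  obtain ⟨b, hb⟩ := IsLocalization.exists_integer_multiple (nonZeroDivisors R) x
  have hbot : (1 : Submodule R K).colon {y} ≠ ⊥ := fun h => nonZeroDivisors.coe_ne_zero b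
    ((Submodule.mem_bot R).mp (h ▸ hxy (mem_colon_singleton.mpr (mem_one.mpr hb))))
  exact ⟨⟨_, hP⟩, hxy,
    PrimeSpectrum.height_eq_orderHeight ⟨_, hP⟩ ▸ height_one_colon_singleton_le_one hy hbot⟩

end Denominators

theorem Module.isTorsion_of_bot_notMem_support {R Q : Type*} [CommRing R] [IsDomain R]
    [AddCommGroup Q] [Module R Q] (h : ⊥ ∉ Module.support R Q) : Module.IsTorsion R Q := by
  intro q
  obtain ⟨r, hr, hrq⟩ := Module.notMem_support_iff'.mp h q
  exact ⟨⟨r, mem_nonZeroDivisors_of_ne_zero (by simpa using hr)⟩, hrq⟩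

section Extension

variable {R M N Q : Type*} [CommRing R] [IsDomain R] [AddCommGroup M] [Module R M]
  [AddCommGroup N] [Module R N] [AddCommGroup Q] [Module R Q] {i : M →ₗ[R] N} {p : N →ₗ[R] Q}

theorem exists_ne_zero_smul_mem_range (hexact : range i = ker p) (hQ : Module.IsTorsion R Q)
    (n : N) : ∃ r : R, r ≠ 0 ∧ r • n ∈ range i := by
  obtain ⟨r, hr⟩ := @hQ (p n)
  refine ⟨r, nonZeroDivisors.coe_ne_zero r, ?_⟩
  rw [hexact, mem_ker, map_smul]
  exact hr

theorem LinearMap.dualMap_injective_of_forall_smul_mem_range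
    (htors : ∀ n : N, ∃ r : R, r ≠ 0 ∧ r • n ∈ range i) : Injective i.dualMap := by
  intro f₁ f₂ h
  ext n
  obtain ⟨r, hr, m, hm⟩ := htors n
  have hfm : f₁ (i m) = f₂ (i m) := congr($h m)
  rw [hm, map_smul, map_smul, smul_eq_mul, smul_eq_mul] at hfm
  exact mul_left_cancel₀ hr hfm

theorem exists_dualMap_eq_of_forall_mul_eq (htors : ∀ n : N, ∃ r : R, r ≠ 0 ∧ r • n ∈ range i)
    {g : Dual R M} {F : N → R} (hF : ∀ (n : N) (r : R) (m : M), i m = r • n → r * F n = g m) :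
    ∃ f : Dual R N, i.dualMap f = g := by
  refine ⟨{ toFun := F, map_add' := fun n n' => ?_, map_smul' := fun c n => ?_ }, ?_⟩
  · obtain ⟨r, hr, m, hm⟩ := htors n
    obtain ⟨r', hr', m', hm'⟩ := htors n'
    have hsum : i (r' • m + r • m') = (r * r') • (n + n') := by
      rw [map_add, map_smul, map_smul, hm, hm', smul_smul, smul_smul, mul_comm r' r, smul_add]
    refine mul_left_cancel₀ (mul_ne_zero hr hr') ?_
    rw [hF _ _ _ hsum, map_add, map_smul, map_smul, ← hF _ _ _ hm, ← hF _ _ _ hm', smul_eq_mul,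
      smul_eq_mul]
    ring
  · obtain ⟨r, hr, m, hm⟩ := htors n
    have hcm : i (c • m) = r • c • n := by rw [map_smul, hm, smul_comm]
    refine mul_left_cancel₀ hr ?_
    rw [hF _ _ _ hcm, map_smul, ← hF _ _ _ hm, RingHom.id_apply, smul_eq_mul, smul_eq_mul]
    ring
  · ext m
    simpa using hF (i m) 1 m (one_smul R (i m)).symm

variable [IsNoetherianRing R] [IsIntegrallyClosed R]

theorem exists_forall_mul_eq_of_two_le_height_support (hi : Injective i)
    (hexact : range i = ker p) (htors : ∀ n : N, ∃ r : R, r ≠ 0 ∧ r • n ∈ range i)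
    (hQ : ∀ 𝔭 ∈ Module.support R Q, 2 ≤ Order.height 𝔭) (g : Dual R M) (n : N) :
    ∃ v : R, ∀ (r : R) (m : M), i m = r • n → r * v = g m := by
  let K := FractionRing R
  obtain ⟨r₀, hr₀, m₀, hm₀⟩ := htors n
  have hr₀K : algebraMap R K r₀ ≠ 0 := (map_ne_zero_iff _ (IsFractionRing.injective R K)).mpr hr₀
  set x : K := algebraMap R K (g m₀) / algebraMap R K r₀
  have hx : ∀ (r : R) (m : M), i m = r • n → r • x = algebraMap R K (g m) := by
    intro r m hm
    have hrm : r • m₀ = r₀ • m := hi (by rw [map_smul, map_smul, hm₀, hm, smul_comm])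
    have hg : r * g m₀ = r₀ * g m := by simpa using congr(g $hrm)
    rw [Algebra.smul_def, mul_div_assoc', div_eq_iff hr₀K, ← map_mul, ← map_mul, hg, mul_comm]
  have hxR : x ∈ (1 : Submodule R K) := by
    by_contra hxR
    obtain ⟨𝔭, hx𝔭, h𝔭⟩ := exists_height_le_one_of_notMem_one hxR
    have h𝔭Q : 𝔭 ∈ Module.support R Q := by
      refine Module.mem_support_iff_exists_annihilator.mpr ⟨p n, fun r hr => hx𝔭 ?_⟩
      obtain ⟨m, hm⟩ : r • n ∈ range i := by
        rw [hexact, mem_ker, map_smul]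
        exact (mem_annihilator_span_singleton _ _).mp hr
      exact mem_colon_singleton.mpr (mem_one.mpr ⟨g m, (hx r m hm).symm⟩)
    exact absurd ((hQ 𝔭 h𝔭Q).trans h𝔭) (by norm_num)
  obtain ⟨v, hv⟩ := mem_one.mp hxR
  refine ⟨v, fun r m hm => IsFractionRing.injective R K ?_⟩
  rw [map_mul, ← hx r m hm, hv, Algebra.smul_def]

end Extension

theorem LinearMap.bijective_of_bijective_dualMap {R M N : Type*} [CommRing R] [AddCommGroup M]
    [Module R M] [AddCommGroup N] [Module R N] [IsReflexive R M] [IsReflexive R N]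
    {f : M →ₗ[R] N} (hf : Bijective f.dualMap) : Bijective f := by
  have : Bijective (Dual.eval R N ∘ f) := by
    rw [← LinearMap.coe_comp, ← Dual.eval_naturality]
    exact (LinearEquiv.ofBijective _ hf).dualMap.bijective.comp (bijective_dual_eval R M)
  exact (Bijective.of_comp_iff' (bijective_dual_eval R N) f).mp this

theorem bijective_iff_isReflexive_of_support_height_ge_two_general
    (R : Type) [CommRing R] [IsDomain R] [IsNoetherianRing R] [IsIntegrallyClosed R]
    (M N Q : Type) [AddCommGroup M] [Module R M] [AddCommGroup N] [Module R N]
    [AddCommGroup Q] [Module R Q]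
    (i : M →ₗ[R] N) (p : N →ₗ[R] Q)
    (hi : Function.Injective i)
    (hexact : LinearMap.range i = LinearMap.ker p)
    [Module.IsReflexive R N]
    (hQ : ∀ 𝔭 ∈ Module.support R Q, 2 ≤ Order.height 𝔭) :
    Function.Bijective i ↔ Module.IsReflexive R M := by
  refine ⟨fun h => Module.equiv (LinearEquiv.ofBijective i h).symm, fun _ => ?_⟩
  have hQtors : Module.IsTorsion R Q :=
    Module.isTorsion_of_bot_notMem_support fun h => by simpa using hQ ⊥ h
  have htors := exists_ne_zero_smul_mem_range hexact hQtors
  refine bijective_of_bijective_dualMap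
    ⟨dualMap_injective_of_forall_smul_mem_range htors, fun g => ?_⟩
  choose F hF using exists_forall_mul_eq_of_two_le_height_support hi hexact htors hQ g
  exact exists_dualMap_eq_of_forall_mul_eq htors hF

/-- Let `R` be a Noetherian integrally closed (normal) domain and let
`0 → M → N → Q → 0` be a short exact sequence of `R`-modules, where `N` is a finitely
generated reflexive `R`-module and every prime ideal in the support of `Q` has height at
least `2`. Then the inclusion `M → N` is an isomorphism if and only if `M` is reflexive. -/
theorem bijective_iff_isReflexive_of_support_height_ge_two
    (R : Type) [CommRing R] [IsDomain R] [IsNoetherianRing R] [IsIntegrallyClosed R]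
    (M N Q : Type) [AddCommGroup M] [Module R M] [AddCommGroup N] [Module R N]
    [AddCommGroup Q] [Module R Q]
    (i : M →ₗ[R] N) (p : N →ₗ[R] Q)
    (hi : Function.Injective i) (hp : Function.Surjective p)
    (hexact : LinearMap.range i = LinearMap.ker p)
    [Module.Finite R N] [Module.IsReflexive R N]
    (hQ : ∀ 𝔭 ∈ Module.support R Q, 2 ≤ Order.height 𝔭) :
    Function.Bijective i ↔ Module.IsReflexive R M :=
  bijective_iff_isReflexive_of_support_height_ge_two_general R M N Q i p hi hexact hQ
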